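/- arXiv:2307.15657 — 2 statements merged into one kernel-verified Lean document; each statement's English description precedes it below -/
import Mathlib

section
/- Let F be the finite field of order q=3^n with n odd, let k be an even nonnegative integer, let d₁=(3^n+1)/2, d₂=(3^k+1)/2, and let f₄ : F → F be f₄(x) = ((x+2)^{d₁}−(x−2)^{d₁})^{d₂} / ((x+2)^{d₂}−(x−2)^{d₂})^{d₁}. Let E be the quadratic extension of F and U_E = {x ∈ E× : x^{3^n} = x^{-1}}. For a ∈ U_E, the set {b ∈ U_E : f₄(b+b^{-1}) = f₄(a+a^{-1})} is exactly {a, 1/a}. -/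
open Polynomial in
private lemma stmt17_exists_pre {F E : Type*} [Field F] [Fintype F] [Field E] [Fintype E]
    [Algebra F E] (z : E) (hz : z ^ (Fintype.card F) = z) :
    ∃ y : F, algebraMap F E y = z := by
  classical
  set q := Fintype.card F with hq
  have hq1 : 1 < q := Fintype.one_lt_card
  have hinj : Function.Injective (algebraMap F E) := (algebraMap F E).injective
  set P : Polynomial E := X ^ q - X with hP
  have hPdeg : P.natDegree = q := by
    rw [hP]
    have h1 : (X ^ q : Polynomial E).natDegree = q := natDegree_X_pow q
    have h2 : (X : Polynomial E).natDegree = 1 := natDegree_X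
    rw [natDegree_sub_eq_left_of_natDegree_lt (by rw [h1, h2]; omega), h1]
  have hP0 : P ≠ 0 := by
    intro h
    rw [h, natDegree_zero] at hPdeg
    omega
  have hroots : ∀ y : F, P.IsRoot (algebraMap F E y) := by
    intro y
    simp only [hP, IsRoot.def, eval_sub, eval_pow, eval_X]
    rw [← map_pow, FiniteField.pow_card, sub_self]
  set A : Finset E := Finset.univ.image (algebraMap F E) with hA
  have hAcard : A.card = q := by
    rw [hA, Finset.card_image_of_injective _ hinj, Finset.card_univ, hq]
  have hsub : A ⊆ P.roots.toFinset := by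
    intro w hw
    rw [hA, Finset.mem_image] at hw
    obtain ⟨y, -, rfl⟩ := hw
    rw [Multiset.mem_toFinset, mem_roots hP0]
    exact hroots y
  have hcard2 : P.roots.toFinset.card ≤ q := by
    refine le_trans (Multiset.toFinset_card_le _) (le_trans (card_roots' P) ?_)
    rw [hPdeg]
  have hEq : A = P.roots.toFinset :=
    Finset.eq_of_subset_of_card_le hsub (by rw [hAcard]; exact hcard2)
  have hzR : z ∈ P.roots.toFinset := by
    rw [Multiset.mem_toFinset, mem_roots hP0]
    simp only [hP, IsRoot.def, eval_sub, eval_pow, eval_X]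
    rw [hz, sub_self]
  rw [← hEq, hA, Finset.mem_image] at hzR
  obtain ⟨y, -, hy⟩ := hzR
  exact ⟨y, hy⟩

private lemma stmt17_mod8 (m : ℕ) : 3 ^ (2 * m) % 8 = 1 := by
  induction m with
  | zero => rfl
  | succ m ih =>
    have h : 3 ^ (2 * (m + 1)) = 3 ^ (2 * m) * 9 := by ring
    rw [h, Nat.mul_mod, ih]

private lemma stmt17_order8 {E : Type*} [Field E] (h3 : (3 : E) = 0) (x : E)
    (hx4 : x ^ 4 = -1) (M : ℕ) (hM : x ^ M = 1) (hM8 : M % 8 ≠ 0) : False := by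
  have hne : (-1 : E) ≠ 1 := by
    intro h
    have h1 : (1 : E) = 0 := by linear_combination h3 + h
    exact one_ne_zero h1
  have hx8 : x ^ 8 = 1 := by
    have h : x ^ 8 = (x ^ 4) ^ 2 := by ring
    rw [h, hx4]
    ring
  have ho8 : orderOf x ∣ 8 := orderOf_dvd_of_pow_eq_one hx8
  have ho4 : ¬ orderOf x ∣ 4 := by
    intro h
    have h4 : x ^ 4 = 1 := orderOf_dvd_iff_pow_eq_one.mp h
    rw [hx4] at h4
    exact hne h4
  have ho : orderOf x = 8 := by
    have ho8' : orderOf x ∣ 2 ^ 3 := by rw [show (2 : ℕ) ^ 3 = 8 by norm_num]; exact ho8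
    obtain ⟨i, hi, hoi⟩ := (Nat.dvd_prime_pow Nat.prime_two).mp ho8'
    have hi3 : i = 3 := by
      by_contra hne3
      have hi2 : i ≤ 2 := by omega
      have hd : (2 : ℕ) ^ i ∣ 4 := by
        rw [show (4 : ℕ) = 2 ^ 2 by norm_num]
        exact pow_dvd_pow 2 hi2
      rw [← hoi] at hd
      exact ho4 hd
    rw [hoi, hi3]
    norm_num
  have hoM : orderOf x ∣ M := orderOf_dvd_of_pow_eq_one hM
  rw [ho] at hoM
  obtain ⟨c, rfl⟩ := hoM
  omega

private lemma stmt17_wcontr {E : Type*} [Field E] (h3 : (3 : E) = 0) {n k : ℕ}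
    (hn8 : 3 ^ n % 8 = 3) (hk8 : 3 ^ k % 8 = 1) (w : E) (hw0 : w ≠ 0)
    (hwt : w ^ (3 ^ k) = -w) (hwq : w ^ (3 ^ n) = -w) : False := by
  obtain ⟨j, hj⟩ : ∃ j, 3 ^ k = 8 * j + 1 := by
    refine ⟨3 ^ k / 8, ?_⟩
    have h := hk8
    generalize (3:ℕ) ^ k = M at h ⊢
    omega
  have hw8j : w ^ (8 * j) = -1 := by
    have h1 : w ^ (8 * j) * w = (-1) * w := by
      rw [← pow_succ, ← hj, hwt, neg_one_mul]
    exact mul_right_cancel₀ hw0 h1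
  have hx4 : (w ^ (2 * j)) ^ 4 = -1 := by
    rw [← pow_mul, show 2 * j * 4 = 8 * j by ring, hw8j]
  have hxq : (w ^ (2 * j)) ^ (3 ^ n) = w ^ (2 * j) := by
    rw [pow_right_comm, hwq]
    exact Even.neg_pow ⟨j, by ring⟩ w
  have hx0 : w ^ (2 * j) ≠ 0 := pow_ne_zero _ hw0
  have hxM : (w ^ (2 * j)) ^ (3 ^ n - 1) = 1 := by
    have h1 : (w ^ (2 * j)) ^ (3 ^ n - 1) * (w ^ (2 * j)) = 1 * (w ^ (2 * j)) := by
      rw [← pow_succ, show 3 ^ n - 1 + 1 = 3 ^ n by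
        have h := hn8; generalize (3:ℕ) ^ n = M at h ⊢; omega, hxq, one_mul]
    exact mul_right_cancel₀ hx0 h1
  exact stmt17_order8 h3 _ hx4 (3 ^ n - 1) hxM (by
    have h := hn8; generalize (3:ℕ) ^ n = M at h ⊢; omega)

private lemma stmt17_noD0 {E : Type*} [Field E] (h3 : (3 : E) = 0) {n k : ℕ}
    (hn8 : 3 ^ n % 8 = 3) (hk8 : 3 ^ k % 8 = 1) (x : E) (hx0 : x ≠ 0)
    (hxU : x ^ (3 ^ n) = x⁻¹) : x ^ (3 ^ k) + x ≠ 0 := by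
  intro hsum
  have hxt : x ^ (3 ^ k) = -x := by linear_combination hsum
  obtain ⟨j, hj⟩ : ∃ j, 3 ^ k = 8 * j + 1 := by
    refine ⟨3 ^ k / 8, ?_⟩
    have h := hk8
    generalize (3:ℕ) ^ k = M at h ⊢
    omega
  have hx8j : x ^ (8 * j) = -1 := by
    have h1 : x ^ (8 * j) * x = (-1) * x := by
      rw [← pow_succ, ← hj, hxt, neg_one_mul]
    exact mul_right_cancel₀ hx0 h1
  have hq1 : x ^ (3 ^ n + 1) = 1 := by
    rw [pow_succ, hxU]
    exact inv_mul_cancel₀ hx0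
  have hy4 : (x ^ (2 * j)) ^ 4 = -1 := by
    rw [← pow_mul, show 2 * j * 4 = 8 * j by ring, hx8j]
  have hyM : (x ^ (2 * j)) ^ (3 ^ n + 1) = 1 := by
    rw [pow_right_comm, hq1, one_pow]
  exact stmt17_order8 h3 _ hy4 (3 ^ n + 1) hyM (by
    have h := hn8; generalize (3:ℕ) ^ n = M at h ⊢; omega)

private lemma stmt17_keyA {E : Type*} [Field E] [CharP E 3] {n k d₁ d₂ : ℕ}
    (h2d₁ : 2 * d₁ = 3 ^ n + 1) (h2d₂ : 2 * d₂ = 3 ^ k + 1)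
    (x V : E) (hx0 : x ≠ 0) (hxU : x ^ (3 ^ n) = x⁻¹)
    (hxt : x ^ (3 ^ k) + x ≠ 0)
    (hV : V = ((x + x⁻¹ + 2) ^ d₁ - (x + x⁻¹ - 2) ^ d₁) ^ d₂ /
        ((x + x⁻¹ + 2) ^ d₂ - (x + x⁻¹ - 2) ^ d₂) ^ d₁) :
    V ^ 2 * (x ^ (3 ^ k) + x) ^ 2 = ((x ^ (3 ^ k)) ^ 2 + 1) * (x ^ 2 + 1) := by
  haveI : Fact (Nat.Prime 3) := ⟨by norm_num⟩
  have h3 : (3 : E) = 0 := by exact_mod_cast CharP.cast_eq_zero E 3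
  have hxi : x * x⁻¹ = 1 := mul_inv_cancel₀ hx0
  have hodd3n : Odd (3 ^ n) := Odd.pow (Nat.odd_iff.mpr rfl)
  have hxq1 : x ^ (3 ^ n + 1) = 1 := by
    rw [pow_succ, hxU]
    exact inv_mul_cancel₀ hx0
  have hε : (x ^ d₁) ^ 2 = 1 := by
    rw [← pow_mul, show d₁ * 2 = 3 ^ n + 1 by rw [mul_comm]; exact h2d₁]
    exact hxq1
  have hY2p : x + x⁻¹ + 2 = (x + 1) ^ 2 * x⁻¹ := by field_simp; ring
  have hY2m : x + x⁻¹ - 2 = (x - 1) ^ 2 * x⁻¹ := by field_simp; ring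
  have hfp_n : (x + 1) ^ (3 ^ n) = x⁻¹ + 1 := by
    rw [add_pow_char_pow, hxU, one_pow]
  have hfm_n : (x - 1) ^ (3 ^ n) = x⁻¹ - 1 := by
    rw [sub_pow_char_pow, hxU, one_pow]
  have hA1 : (x + x⁻¹ + 2) ^ d₁ * x ^ d₁ = (x⁻¹ + 1) * (x + 1) := by
    rw [hY2p, mul_pow, mul_assoc, ← mul_pow, inv_mul_cancel₀ hx0, one_pow, mul_one,
      ← pow_mul, show 2 * d₁ = 3 ^ n + 1 from h2d₁, pow_succ, hfp_n]
  have hB1 : (x + x⁻¹ - 2) ^ d₁ * x ^ d₁ = (x⁻¹ - 1) * (x - 1) := by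
    rw [hY2m, mul_pow, mul_assoc, ← mul_pow, inv_mul_cancel₀ hx0, one_pow, mul_one,
      ← pow_mul, show 2 * d₁ = 3 ^ n + 1 from h2d₁, pow_succ, hfm_n]
  have hfp_k : (x + 1) ^ (3 ^ k) = x ^ (3 ^ k) + 1 := by rw [add_pow_char_pow, one_pow]
  have hfm_k : (x - 1) ^ (3 ^ k) = x ^ (3 ^ k) - 1 := by rw [sub_pow_char_pow, one_pow]
  have hC1 : (x + x⁻¹ + 2) ^ d₂ * x ^ d₂ = (x ^ (3 ^ k) + 1) * (x + 1) := by
    rw [hY2p, mul_pow, mul_assoc, ← mul_pow, inv_mul_cancel₀ hx0, one_pow, mul_one,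
      ← pow_mul, show 2 * d₂ = 3 ^ k + 1 from h2d₂, pow_succ, hfp_k]
  have hD1 : (x + x⁻¹ - 2) ^ d₂ * x ^ d₂ = (x ^ (3 ^ k) - 1) * (x - 1) := by
    rw [hY2m, mul_pow, mul_assoc, ← mul_pow, inv_mul_cancel₀ hx0, one_pow, mul_one,
      ← pow_mul, show 2 * d₂ = 3 ^ k + 1 from h2d₂, pow_succ, hfm_k]
  have hNe : ((x + x⁻¹ + 2) ^ d₁ - (x + x⁻¹ - 2) ^ d₁) * x ^ d₁ = -(x + x⁻¹) := by
    rw [sub_mul, hA1, hB1]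
    linear_combination (x + x⁻¹) * h3
  have hDe : ((x + x⁻¹ + 2) ^ d₂ - (x + x⁻¹ - 2) ^ d₂) * x ^ d₂ = -(x ^ (3 ^ k) + x) := by
    rw [sub_mul, hC1, hD1]
    linear_combination (x ^ (3 ^ k) + x) * h3
  set Dd := (x + x⁻¹ + 2) ^ d₂ - (x + x⁻¹ - 2) ^ d₂ with hDddef
  set N := (x + x⁻¹ + 2) ^ d₁ - (x + x⁻¹ - 2) ^ d₁ with hNdef
  have hDd0 : Dd ≠ 0 := by
    intro h
    apply hxt
    have h' := hDe
    rw [h, zero_mul] at h'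
    linear_combination h'
  have hVm : V * Dd ^ d₁ = N ^ d₂ := by
    rw [hV]
    exact div_mul_cancel₀ _ (pow_ne_zero _ hDd0)
  have hN2 : N ^ 2 = (x + x⁻¹) ^ 2 := by
    have h1 : (N * x ^ d₁) ^ 2 = (x + x⁻¹) ^ 2 := by rw [hNe]; ring
    rwa [mul_pow, hε, mul_one] at h1
  have hxdd : x ^ d₂ * x ^ d₂ = x ^ (3 ^ k) * x := by
    rw [← pow_add, show d₂ + d₂ = 3 ^ k + 1 by rw [← two_mul]; exact h2d₂, pow_succ]
  have hx_in : (x⁻¹) ^ (3 ^ k) * x ^ (3 ^ k) = 1 := by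
    rw [← mul_pow, inv_mul_cancel₀ hx0, one_pow]
  have hinvd : (x⁻¹) ^ d₂ * x ^ d₂ = 1 := by
    rw [← mul_pow, inv_mul_cancel₀ hx0, one_pow]
  have e2 : Dd * (x⁻¹) ^ d₂ = -((x⁻¹) ^ (3 ^ k) + x⁻¹) := by
    have hc : x ^ d₂ * x ^ d₂ ≠ 0 := mul_ne_zero (pow_ne_zero _ hx0) (pow_ne_zero _ hx0)
    apply mul_right_cancel₀ hc
    calc Dd * (x⁻¹) ^ d₂ * (x ^ d₂ * x ^ d₂)
        = (Dd * x ^ d₂) * ((x⁻¹) ^ d₂ * x ^ d₂) := by ring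
      _ = -(x ^ (3 ^ k) + x) := by rw [hDe, hinvd, mul_one]
      _ = -((x⁻¹) ^ (3 ^ k) + x⁻¹) * (x ^ d₂ * x ^ d₂) := by
          rw [hxdd]
          linear_combination x * hx_in + x ^ (3 ^ k) * hxi
  have e1 : Dd ^ (3 ^ n) * (x⁻¹) ^ d₂ = -((x⁻¹) ^ (3 ^ k) + x⁻¹) := by
    have h : (Dd * x ^ d₂) ^ (3 ^ n) = (-(x ^ (3 ^ k) + x)) ^ (3 ^ n) := by rw [hDe]
    rw [mul_pow, pow_right_comm x d₂ (3 ^ n), hxU] at h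
    rw [Odd.neg_pow hodd3n, add_pow_char_pow, pow_right_comm x (3 ^ k) (3 ^ n), hxU] at h
    exact h
  have hDdfrob : Dd ^ (3 ^ n) = Dd := by
    have hiv : (x⁻¹) ^ d₂ ≠ 0 := pow_ne_zero _ (inv_ne_zero hx0)
    exact mul_right_cancel₀ hiv (e1.trans e2.symm)
  have hsq : V ^ 2 * Dd ^ 2 = ((x + x⁻¹) ^ 2) ^ d₂ := by
    have h2 : (Dd ^ d₁) ^ 2 = Dd ^ 2 := by
      rw [← pow_mul, show d₁ * 2 = 3 ^ n + 1 by rw [mul_comm]; exact h2d₁, pow_succ, hDdfrob]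
      ring
    calc V ^ 2 * Dd ^ 2 = (V * Dd ^ d₁) ^ 2 := by rw [mul_pow, h2]
      _ = (N ^ d₂) ^ 2 := by rw [hVm]
      _ = (N ^ 2) ^ d₂ := pow_right_comm N d₂ 2
      _ = ((x + x⁻¹) ^ 2) ^ d₂ := by rw [hN2]
  have hYx : (x + x⁻¹) * x = x ^ 2 + 1 := by
    field_simp
  have hDx2 : (Dd * x ^ d₂) ^ 2 = (x ^ (3 ^ k) + x) ^ 2 := by rw [hDe]; ring
  calc V ^ 2 * (x ^ (3 ^ k) + x) ^ 2
      = V ^ 2 * (Dd * x ^ d₂) ^ 2 := by rw [hDx2]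
    _ = (V ^ 2 * Dd ^ 2) * (x ^ 2) ^ d₂ := by rw [mul_pow, pow_right_comm x d₂ 2]; ring
    _ = ((x + x⁻¹) ^ 2) ^ d₂ * (x ^ 2) ^ d₂ := by rw [hsq]
    _ = (((x + x⁻¹) * x) ^ 2) ^ d₂ := by rw [← mul_pow, ← mul_pow]
    _ = ((x ^ 2 + 1) ^ 2) ^ d₂ := by rw [hYx]
    _ = (x ^ 2 + 1) ^ (3 ^ k + 1) := by rw [← pow_mul, show 2 * d₂ = 3 ^ k + 1 from h2d₂]
    _ = ((x ^ 2) ^ (3 ^ k) + 1) * (x ^ 2 + 1) := by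
        rw [pow_succ, add_pow_char_pow, one_pow]
    _ = ((x ^ (3 ^ k)) ^ 2 + 1) * (x ^ 2 + 1) := by rw [pow_right_comm]

theorem stmt17 (n k : ℕ) (hn : Odd n) (hk : Even k)
    (F E : Type*) [Field F] [Fintype F] [Field E] [Fintype E] [Algebra F E]
    (hF : Fintype.card F = 3 ^ n) (hE : Fintype.card E = Fintype.card F ^ 2)
    (d₁ d₂ : ℕ) (hd₁ : d₁ = (3 ^ n + 1) / 2) (hd₂ : d₂ = (3 ^ k + 1) / 2)
    (f₄ : F → F)
    (hf₄ : ∀ x : F,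
      f₄ x = ((x + 2) ^ d₁ - (x - 2) ^ d₁) ^ d₂ / ((x + 2) ^ d₂ - (x - 2) ^ d₂) ^ d₁)
    (a : E) (ha : a ≠ 0) (haU : a ^ (3 ^ n) = a⁻¹) :
    {b : E | (b ≠ 0 ∧ b ^ (3 ^ n) = b⁻¹) ∧
      ∃ ya yb : F, algebraMap F E ya = a + a⁻¹ ∧ algebraMap F E yb = b + b⁻¹ ∧
        f₄ yb = f₄ ya} = {a, a⁻¹} := by
  classical
  obtain ⟨m, hm⟩ := hn
  have hn8 : 3 ^ n % 8 = 3 := by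
    rw [hm, pow_succ, Nat.mul_mod, stmt17_mod8 m]
  obtain ⟨m', hm'⟩ := hk
  have hk8 : 3 ^ k % 8 = 1 := by
    rw [hm', show m' + m' = 2 * m' by ring, stmt17_mod8 m']
  have h2d₁ : 2 * d₁ = 3 ^ n + 1 := by
    have h := hn8
    generalize (3:ℕ) ^ n = M at h hd₁ ⊢
    omega
  have h2d₂ : 2 * d₂ = 3 ^ k + 1 := by
    have h := hk8
    generalize (3:ℕ) ^ k = M at h hd₂ ⊢
    omega
  have hd₁even : Even d₁ := by
    rw [Nat.even_iff]
    have h := hn8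
    have h' := h2d₁
    generalize (3:ℕ) ^ n = M at h h'
    omega
  have hd₂odd : Odd d₂ := by
    rw [Nat.odd_iff]
    have h := hk8
    have h' := h2d₂
    generalize (3:ℕ) ^ k = M at h h'
    omega
  have hcardE : Fintype.card E = 3 ^ (2 * n) := by
    rw [hE, hF, ← pow_mul, Nat.mul_comm]
  haveI hCharE : CharP E 3 := by
    have hp := ringChar.charP E
    have hpprime : (ringChar E).Prime := CharP.char_is_prime E (ringChar E)
    obtain ⟨m'', hpp, hcard⟩ := FiniteField.card E (ringChar E)
    rw [hcardE] at hcard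
    have hdvd : ringChar E ∣ 3 ^ (2 * n) := by
      rw [hcard]
      exact dvd_pow_self _ m''.ne_zero
    have h33 : ringChar E = 3 :=
      (Nat.prime_dvd_prime_iff_eq hpprime (by norm_num)).mp
        (Nat.Prime.dvd_of_dvd_pow hpprime hdvd)
    rwa [h33] at hp
  haveI : Fact (Nat.Prime 3) := ⟨by norm_num⟩
  have h3E : (3 : E) = 0 := by exact_mod_cast CharP.cast_eq_zero E 3
  have hm1 : (-1 : E) ≠ 1 := by
    intro h
    exact one_ne_zero (α := E) (by linear_combination h3E + h)
  have hinj : Function.Injective (algebraMap F E) := (algebraMap F E).injective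
  have hf4odd : ∀ y : F, f₄ (-y) = - f₄ y := by
    intro y
    rw [hf₄, hf₄]
    rw [show -y + 2 = -(y - 2) by ring, show -y - 2 = -(y + 2) by ring,
      hd₁even.neg_pow, hd₁even.neg_pow, hd₂odd.neg_pow, hd₂odd.neg_pow,
      show (y - 2) ^ d₁ - (y + 2) ^ d₁ = -((y + 2) ^ d₁ - (y - 2) ^ d₁) by ring,
      hd₂odd.neg_pow,
      show -((y - 2) ^ d₂) - -((y + 2) ^ d₂) = (y + 2) ^ d₂ - (y - 2) ^ d₂ by ring,
      neg_div]
  ext b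
  simp only [Set.mem_setOf_eq, Set.mem_insert_iff, Set.mem_singleton_iff]
  constructor
  · rintro ⟨⟨hb0, hbU⟩, ya, yb, hya, hyb, hfeq⟩
    have haq1 : a ^ (3 ^ n + 1) = 1 := by
      rw [pow_succ, haU]; exact inv_mul_cancel₀ ha
    have hVa : algebraMap F E (f₄ ya) =
        ((a + a⁻¹ + 2) ^ d₁ - (a + a⁻¹ - 2) ^ d₁) ^ d₂ /
        ((a + a⁻¹ + 2) ^ d₂ - (a + a⁻¹ - 2) ^ d₂) ^ d₁ := by
      rw [hf₄]
      simp only [map_div₀, map_pow, map_sub, map_add, map_ofNat, hya]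
    have hVb : algebraMap F E (f₄ ya) =
        ((b + b⁻¹ + 2) ^ d₁ - (b + b⁻¹ - 2) ^ d₁) ^ d₂ /
        ((b + b⁻¹ + 2) ^ d₂ - (b + b⁻¹ - 2) ^ d₂) ^ d₁ := by
      rw [← hfeq, hf₄]
      simp only [map_div₀, map_pow, map_sub, map_add, map_ofNat, hyb]
    have hDa : a ^ (3 ^ k) + a ≠ 0 := stmt17_noD0 h3E hn8 hk8 a ha haU
    have hDb : b ^ (3 ^ k) + b ≠ 0 := stmt17_noD0 h3E hn8 hk8 b hb0 hbU
    have hKa := stmt17_keyA h2d₁ h2d₂ a (algebraMap F E (f₄ ya)) ha haU hDa hVa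
    have hKb := stmt17_keyA h2d₁ h2d₂ b (algebraMap F E (f₄ ya)) hb0 hbU hDb hVb
    set V := algebraMap F E (f₄ ya) with hVdef
    set A := a ^ (3 ^ k) with hAdef
    set B := b ^ (3 ^ k) with hBdef
    have hBa : (V ^ 2 - 1) * (A + a) ^ 2 = (A * a - 1) ^ 2 := by linear_combination hKa
    have hBb : (V ^ 2 - 1) * (B + b) ^ 2 = (B * b - 1) ^ 2 := by linear_combination hKb
    have hfact : ((A * a - 1) * (B + b) - (B * b - 1) * (A + a)) *
        ((A * a - 1) * (B + b) + (B * b - 1) * (A + a)) = 0 := by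
      linear_combination (A + a) ^ 2 * hBb - (B + b) ^ 2 * hBa
    have hsubf : (a - b) ^ (3 ^ k) = A - B := by rw [sub_pow_char_pow]
    have haddf : (a + b) ^ (3 ^ k) = A + B := by rw [add_pow_char_pow]
    have habp : (a * b + 1) ^ (3 ^ k) = A * B + 1 := by
      rw [add_pow_char_pow, mul_pow, one_pow]
    have habm : (a * b - 1) ^ (3 ^ k) = A * B - 1 := by
      rw [sub_pow_char_pow, mul_pow, one_pow]
    have hquad : b = a ∨ b = a⁻¹ ∨ b = -a ∨ b = -a⁻¹ := by
      rcases mul_eq_zero.mp hfact with hcase | hcase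
      · have hid : (a - b) * (A * B + 1) + (A - B) * (a * b + 1) = 0 := by
          linear_combination hcase
        by_cases he : a - b = 0
        · exact Or.inl (by linear_combination -he)
        by_cases hh : a * b + 1 = 0
        · refine Or.inr (Or.inr (Or.inr ?_))
          field_simp
          linear_combination hh
        exfalso
        have hABp : A * B + 1 ≠ 0 := by rw [← habp]; exact pow_ne_zero _ hh
        have hw0 : (a - b) * (a * b + 1)⁻¹ ≠ 0 := mul_ne_zero he (inv_ne_zero hh)
        have hwt : ((a - b) * (a * b + 1)⁻¹) ^ (3 ^ k) = -((a - b) * (a * b + 1)⁻¹) := by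
          rw [mul_pow, inv_pow, hsubf, habp]
          apply mul_right_cancel₀ (mul_ne_zero hABp hh)
          have l1 : (A - B) * (A * B + 1)⁻¹ * ((A * B + 1) * (a * b + 1)) =
              (A - B) * (a * b + 1) * ((A * B + 1)⁻¹ * (A * B + 1)) := by ring
          have l2 : -((a - b) * (a * b + 1)⁻¹) * ((A * B + 1) * (a * b + 1)) =
              -((a - b) * (A * B + 1)) * ((a * b + 1)⁻¹ * (a * b + 1)) := by ring
          rw [l1, inv_mul_cancel₀ hABp, mul_one, l2, inv_mul_cancel₀ hh, mul_one]
          linear_combination hid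
        have hfa : (a - b) ^ (3 ^ n) = a⁻¹ - b⁻¹ := by
          rw [sub_pow_char_pow, haU, hbU]
        have hfb : (a * b + 1) ^ (3 ^ n) = a⁻¹ * b⁻¹ + 1 := by
          rw [add_pow_char_pow, mul_pow, haU, hbU, one_pow]
        have hib0 : a⁻¹ * b⁻¹ + 1 ≠ 0 := by
          intro hcon
          apply hh
          have h1 : a * b + 1 = (a * b) * (a⁻¹ * b⁻¹ + 1) := by field_simp; ring
          rw [h1, hcon, mul_zero]
        have hxia : a * a⁻¹ = 1 := mul_inv_cancel₀ ha
        have hxib : b * b⁻¹ = 1 := mul_inv_cancel₀ hb0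
        have hwq : ((a - b) * (a * b + 1)⁻¹) ^ (3 ^ n) = -((a - b) * (a * b + 1)⁻¹) := by
          rw [mul_pow, inv_pow, hfa, hfb]
          apply mul_right_cancel₀ (mul_ne_zero hib0 hh)
          have l1 : (a⁻¹ - b⁻¹) * (a⁻¹ * b⁻¹ + 1)⁻¹ * ((a⁻¹ * b⁻¹ + 1) * (a * b + 1)) =
              (a⁻¹ - b⁻¹) * (a * b + 1) * ((a⁻¹ * b⁻¹ + 1)⁻¹ * (a⁻¹ * b⁻¹ + 1)) := by ring
          have l2 : -((a - b) * (a * b + 1)⁻¹) * ((a⁻¹ * b⁻¹ + 1) * (a * b + 1)) =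
              -((a - b) * (a⁻¹ * b⁻¹ + 1)) * ((a * b + 1)⁻¹ * (a * b + 1)) := by ring
          rw [l1, inv_mul_cancel₀ hib0, mul_one, l2, inv_mul_cancel₀ hh, mul_one]
          linear_combination (b + b⁻¹) * hxia - (a + a⁻¹) * hxib
        exact stmt17_wcontr h3E hn8 hk8 _ hw0 hwt hwq
      · have hid : (a + b) * (A * B - 1) + (A + B) * (a * b - 1) = 0 := by
          linear_combination hcase
        by_cases hf0 : a + b = 0
        · exact Or.inr (Or.inr (Or.inl (by linear_combination hf0)))
        by_cases hg0 : a * b - 1 = 0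
        · refine Or.inr (Or.inl ?_)
          exact (inv_eq_of_mul_eq_one_right (by linear_combination hg0)).symm
        exfalso
        have hABm : A * B - 1 ≠ 0 := by rw [← habm]; exact pow_ne_zero _ hg0
        have hw0 : (a + b) * (a * b - 1)⁻¹ ≠ 0 := mul_ne_zero hf0 (inv_ne_zero hg0)
        have hwt : ((a + b) * (a * b - 1)⁻¹) ^ (3 ^ k) = -((a + b) * (a * b - 1)⁻¹) := by
          rw [mul_pow, inv_pow, haddf, habm]
          apply mul_right_cancel₀ (mul_ne_zero hABm hg0)
          have l1 : (A + B) * (A * B - 1)⁻¹ * ((A * B - 1) * (a * b - 1)) =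
              (A + B) * (a * b - 1) * ((A * B - 1)⁻¹ * (A * B - 1)) := by ring
          have l2 : -((a + b) * (a * b - 1)⁻¹) * ((A * B - 1) * (a * b - 1)) =
              -((a + b) * (A * B - 1)) * ((a * b - 1)⁻¹ * (a * b - 1)) := by ring
          rw [l1, inv_mul_cancel₀ hABm, mul_one, l2, inv_mul_cancel₀ hg0, mul_one]
          linear_combination hid
        have hfa : (a + b) ^ (3 ^ n) = a⁻¹ + b⁻¹ := by
          rw [add_pow_char_pow, haU, hbU]
        have hfb : (a * b - 1) ^ (3 ^ n) = a⁻¹ * b⁻¹ - 1 := by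
          rw [sub_pow_char_pow, mul_pow, haU, hbU, one_pow]
        have hib0 : a⁻¹ * b⁻¹ - 1 ≠ 0 := by
          intro hcon
          apply hg0
          have h1 : a * b - 1 = -((a * b) * (a⁻¹ * b⁻¹ - 1)) := by field_simp; ring
          rw [h1, hcon, mul_zero, neg_zero]
        have hxia : a * a⁻¹ = 1 := mul_inv_cancel₀ ha
        have hxib : b * b⁻¹ = 1 := mul_inv_cancel₀ hb0
        have hwq : ((a + b) * (a * b - 1)⁻¹) ^ (3 ^ n) = -((a + b) * (a * b - 1)⁻¹) := by
          rw [mul_pow, inv_pow, hfa, hfb]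
          apply mul_right_cancel₀ (mul_ne_zero hib0 hg0)
          have l1 : (a⁻¹ + b⁻¹) * (a⁻¹ * b⁻¹ - 1)⁻¹ * ((a⁻¹ * b⁻¹ - 1) * (a * b - 1)) =
              (a⁻¹ + b⁻¹) * (a * b - 1) * ((a⁻¹ * b⁻¹ - 1)⁻¹ * (a⁻¹ * b⁻¹ - 1)) := by ring
          have l2 : -((a + b) * (a * b - 1)⁻¹) * ((a⁻¹ * b⁻¹ - 1) * (a * b - 1)) =
              -((a + b) * (a⁻¹ * b⁻¹ - 1)) * ((a * b - 1)⁻¹ * (a * b - 1)) := by ring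
          rw [l1, inv_mul_cancel₀ hib0, mul_one, l2, inv_mul_cancel₀ hg0, mul_one]
          linear_combination (b + b⁻¹) * hxia + (a + a⁻¹) * hxib
        exact stmt17_wcontr h3E hn8 hk8 _ hw0 hwt hwq
    have hneg : b + b⁻¹ = -(a + a⁻¹) → a⁻¹ = -a := by
      intro hYb
      have hyb' : yb = -ya := hinj (by rw [map_neg, hya, hyb, hYb])
      have hV0 : V = 0 := by
        have h1 : f₄ yb = - f₄ ya := by rw [hyb', hf4odd]
        have h2' : f₄ ya = - f₄ ya := hfeq.symm.trans h1
        have h3' : V = -V := by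
          calc V = algebraMap F E (f₄ ya) := hVdef
            _ = algebraMap F E (- f₄ ya) := by rw [← h2']
            _ = -V := by rw [map_neg]
        have h2V : (2 : E) * V = 0 := by linear_combination h3'
        have h2ne : (2 : E) ≠ 0 := by
          intro hcon
          exact one_ne_zero (α := E) (by linear_combination h3E - hcon)
        exact (mul_eq_zero.mp h2V).resolve_left h2ne
      have h0 : (A ^ 2 + 1) * (a ^ 2 + 1) = 0 := by
        rw [← hKa, hV0]
        ring
      have ha2 : a ^ 2 = -1 := by
        rcases mul_eq_zero.mp h0 with h' | h'
        · have hz : (a ^ 2) ^ (3 ^ k) = -1 := by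
            rw [pow_right_comm]
            linear_combination h'
          have hz2 : (a ^ 2) ^ (2 * 3 ^ k) = 1 := by
            rw [mul_comm, pow_mul, hz]
            ring
          have hzq : (a ^ 2) ^ (3 ^ n + 1) = 1 := by
            rw [pow_right_comm, haq1, one_pow]
          have ho1 : orderOf (a ^ 2) ∣ 3 ^ k * 2 := by
            rw [mul_comm]
            exact orderOf_dvd_of_pow_eq_one hz2
          have ho2 : orderOf (a ^ 2) ∣ 3 ^ n + 1 := orderOf_dvd_of_pow_eq_one hzq
          have hcop : Nat.Coprime (3 ^ k) (3 ^ n + 1) := by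
            apply Nat.Coprime.pow_left
            refine (Nat.Prime.coprime_iff_not_dvd (by norm_num)).mpr ?_
            intro hdvd
            have h3n : (3 : ℕ) ∣ 3 ^ n := dvd_pow_self 3 (by omega)
            generalize (3:ℕ) ^ n = M at h3n hdvd
            omega
          have hdvd2 : orderOf (a ^ 2) ∣ 2 := by
            have hg := Nat.dvd_gcd ho1 ho2
            rw [Nat.Coprime.gcd_mul_left_cancel 2 hcop] at hg
            exact hg.trans (Nat.gcd_dvd_left 2 _)
          have hz1 : (a ^ 2) ^ 2 = 1 := orderOf_dvd_iff_pow_eq_one.mp hdvd2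
          have hfac : (a ^ 2 - 1) * (a ^ 2 + 1) = 0 := by linear_combination hz1
          rcases mul_eq_zero.mp hfac with h'' | h''
          · exfalso
            have ha21 : a ^ 2 = 1 := by linear_combination h''
            rw [ha21, one_pow] at hz
            exact hm1 hz.symm
          · linear_combination h''
        · linear_combination h'
      exact inv_eq_of_mul_eq_one_right (by linear_combination -ha2)
    rcases hquad with h | h | h | h
    · exact Or.inl h
    · exact Or.inr h
    · have hia := hneg (by rw [h, inv_neg]; ring)
      exact Or.inr (h.trans hia.symm)
    · have hia := hneg (by rw [h, inv_neg, inv_inv]; ring)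
      exact Or.inl (h.trans (by rw [hia, neg_neg]))
  · intro hb
    have hz : (a + a⁻¹) ^ Fintype.card F = a + a⁻¹ := by
      rw [hF, add_pow_char_pow, haU, inv_pow, haU, inv_inv, add_comm]
    obtain ⟨y₀, hy₀⟩ := stmt17_exists_pre (a + a⁻¹) hz
    have haiU : (a⁻¹) ^ (3 ^ n) = (a⁻¹)⁻¹ := by rw [inv_pow, haU]
    rcases hb with rfl | rfl
    · exact ⟨⟨ha, haU⟩, y₀, y₀, hy₀, hy₀, rfl⟩
    · refine ⟨⟨inv_ne_zero ha, haiU⟩, y₀, y₀, hy₀, ?_, rfl⟩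
      rw [hy₀, inv_inv]
      ring
end

section
/- Let F be the finite field of order 3^n with n odd, let k be an even nonnegative integer with gcd(k,n)=1, let d₁=(3^n+1)/2, d₂=(3^k+1)/2, and let f₄ : F → F be f₄(x) = ((x+2)^{d₁}−(x−2)^{d₁})^{d₂} / ((x+2)^{d₂}−(x−2)^{d₂})^{d₁}. Let η be the quadratic character of F. Then for every c ∈ F, the cardinality of the fiber f₄^{-1}({c}) equals 1 if c lies in the prime subfield F_3, and equals 1+η(1−c²) otherwise. -/
private lemma st19_dvd_two (m a b : ℕ) (hb : b ≠ 0) (hab : Nat.gcd a b = 1)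
    (ha3 : m ∣ 3 ^ a - 1) (hb3 : m ∣ 3 ^ b - 1) : m ∣ 2 := by
  have hb1 : 1 ≤ 3 ^ b := Nat.one_le_pow _ _ (by norm_num)
  have ha1 : 1 ≤ 3 ^ a := Nat.one_le_pow _ _ (by norm_num)
  have hb2 : 3 ≤ 3 ^ b := by
    calc (3:ℕ) = 3 ^ 1 := (pow_one 3).symm
    _ ≤ 3 ^ b := Nat.pow_le_pow_right (by norm_num) (by omega)
  have hm0 : m ≠ 0 := by
    rintro rfl
    have := Nat.zero_dvd.mp hb3
    omega
  haveI : NeZero m := ⟨hm0⟩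
  have hcb : ((3 : ZMod m)) ^ b = 1 := by
    have h := (ZMod.natCast_eq_zero_iff _ m).mpr hb3
    rw [Nat.cast_sub hb1] at h
    push_cast at h
    linear_combination h
  have hca : ((3 : ZMod m)) ^ a = 1 := by
    have h := (ZMod.natCast_eq_zero_iff _ m).mpr ha3
    rw [Nat.cast_sub ha1] at h
    push_cast at h
    linear_combination h
  have hu : IsUnit (3 : ZMod m) := by
    apply IsUnit.of_mul_eq_one ((3 : ZMod m) ^ (b - 1))
    calc (3 : ZMod m) * 3 ^ (b - 1) = 3 ^ b := by
          rw [← pow_succ']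
          congr 1
          omega
    _ = 1 := hcb
  have hua : hu.unit ^ a = 1 := by
    apply Units.ext
    push_cast
    rw [hu.unit_spec, hca]
  have hub : hu.unit ^ b = 1 := by
    apply Units.ext
    push_cast
    rw [hu.unit_spec, hcb]
  have h1 : orderOf hu.unit ∣ Nat.gcd a b :=
    Nat.dvd_gcd (orderOf_dvd_of_pow_eq_one hua) (orderOf_dvd_of_pow_eq_one hub)
  rw [hab, Nat.dvd_one, orderOf_eq_one_iff] at h1
  have h31 : (3 : ZMod m) = 1 := by rw [← hu.unit_spec, h1, Units.val_one]
  have h20 : ((2 : ℕ) : ZMod m) = 0 := by push_cast; linear_combination h31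
  exact (ZMod.natCast_eq_zero_iff 2 m).mp h20

theorem stmt19 (n k : ℕ) (hn : Odd n) (hk : Even k) (hgcd : Nat.gcd k n = 1)
    (F : Type*) [Field F] [Fintype F] (hF : Fintype.card F = 3 ^ n)
    (d₁ d₂ : ℕ) (hd₁ : d₁ = (3 ^ n + 1) / 2) (hd₂ : d₂ = (3 ^ k + 1) / 2)
    (f₄ : F → F)
    (hf₄ : ∀ x : F,
      f₄ x = ((x + 2) ^ d₁ - (x - 2) ^ d₁) ^ d₂ / ((x + 2) ^ d₂ - (x - 2) ^ d₂) ^ d₁)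
    (η : F → ℤ)
    (hη : ∀ c : F, c ≠ 0 → (IsSquare c → η c = 1) ∧ (¬ IsSquare c → η c = -1)) :
    (∀ c : F, (c = 0 ∨ c = 1 ∨ c = -1) → Nat.card {x : F // f₄ x = c} = 1) ∧
    (∀ c : F, ¬ (c = 0 ∨ c = 1 ∨ c = -1) →
      (Nat.card {x : F // f₄ x = c} : ℤ) = 1 + η (1 - c ^ 2)) := by
  classical
  -- ## ℕ facts
  obtain ⟨n', hn'⟩ := hn
  have hn0 : n ≠ 0 := by omega
  have h1n : 1 ≤ 3 ^ n := Nat.one_le_pow _ _ (by norm_num)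
  have h1k : 1 ≤ 3 ^ k := Nat.one_le_pow _ _ (by norm_num)
  have h3n : 3 ≤ 3 ^ n := by
    calc (3:ℕ) = 3 ^ 1 := (pow_one 3).symm
    _ ≤ 3 ^ n := Nat.pow_le_pow_right (by norm_num) (by omega)
  have h4n : 4 ∣ 3 ^ n + 1 := by
    have h : ((3 ^ n + 1 : ℕ) : ZMod 4) = 0 := by
      push_cast
      have h3 : (3 : ZMod 4) = -1 := by decide
      rw [h3, Odd.neg_one_pow ⟨n', by omega⟩]
      ring
    exact (ZMod.natCast_eq_zero_iff _ 4).mp h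
  have h4k : 4 ∣ 3 ^ k - 1 := by
    have h : ((3 ^ k - 1 : ℕ) : ZMod 4) = 0 := by
      rw [Nat.cast_sub h1k]
      push_cast
      have h3 : (3 : ZMod 4) = -1 := by decide
      rw [h3, Even.neg_one_pow hk]
      ring
    exact (ZMod.natCast_eq_zero_iff _ 4).mp h
  have hodd3n : Odd (3 ^ n : ℕ) := Odd.pow (⟨1, by norm_num⟩ : Odd 3)
  have hodd3k : Odd (3 ^ k : ℕ) := Odd.pow (⟨1, by norm_num⟩ : Odd 3)
  have h2d₁ : 2 * d₁ = 3 ^ n + 1 := by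
    rw [hd₁]; rw [Nat.mul_div_cancel']
    obtain ⟨j, hj⟩ := hodd3n; omega
  have h2d₂ : 2 * d₂ = 3 ^ k + 1 := by
    rw [hd₂]; rw [Nat.mul_div_cancel']
    obtain ⟨j, hj⟩ := hodd3k; omega
  obtain ⟨m₁, hm₁⟩ : ∃ m, d₁ = 2 * m := by
    have : 2 ∣ d₁ := by omega
    exact this
  have hd₂odd : Odd d₂ := Nat.odd_iff.mpr (by omega)
  have hd₁e : Even d₁ := ⟨m₁, by omega⟩
  have hd₂0 : d₂ ≠ 0 := by omega
  have hd₁0 : d₁ ≠ 0 := by omega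
  have hgcd2 : Nat.gcd (2 * k) n = 1 := by
    have h2n : Nat.Coprime 2 n := by
      exact Nat.coprime_two_left.mpr ⟨n', by omega⟩
    exact Nat.Coprime.mul h2n hgcd
  -- ## characteristic
  obtain ⟨p, hpC⟩ := CharP.exists F
  haveI := hpC
  obtain ⟨mm, hp, hcard⟩ := FiniteField.card F p
  have hp3 : p = 3 := by
    have heq : (3:ℕ) ^ n = p ^ (mm : ℕ) := by rw [← hF, hcard]
    have h1 : p ∣ 3 ^ n := heq ▸ dvd_pow_self p mm.pos.ne'
    have h2 := hp.dvd_of_dvd_pow h1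
    exact (Nat.prime_dvd_prime_iff_eq hp (by norm_num)).mp h2
  subst hp3
  haveI : Fact (Nat.Prime 3) := ⟨by norm_num⟩
  have h3F : (3 : F) = 0 := CharP.cast_eq_zero F 3
  have h2F : (2 : F) = -1 := by linear_combination h3F
  have hne10 : (1 : F) ≠ -1 := by
    intro h
    exact one_ne_zero (α := F) (by linear_combination h3F - h)
  have h2ne : (2 : F) ≠ 0 := by rw [h2F]; exact neg_ne_zero.mpr one_ne_zero
  -- ## Frobenius basics
  have hqp : ∀ a : F, a ^ (3 ^ n) = a := by
    intro a; rw [← hF]; exact FiniteField.pow_card a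
  have hsadd : ∀ a b : F, (a + b) ^ (3 ^ k) = a ^ (3 ^ k) + b ^ (3 ^ k) := fun a b =>
    add_pow_char_pow a b 3 k
  have hssub : ∀ a b : F, (a - b) ^ (3 ^ k) = a ^ (3 ^ k) - b ^ (3 ^ k) := fun a b =>
    sub_pow_char_pow a b k
  have hoddK : Odd ((3 : ℕ) ^ k) := Odd.pow (⟨1, by norm_num⟩ : Odd 3)
  have hnegK : ∀ a : F, (-a) ^ (3 ^ k) = -(a ^ (3 ^ k)) := fun a => hoddK.neg_pow a
  have hpow2k : ∀ a : F, (a ^ (3 ^ k)) ^ (3 ^ k) = a ^ (3 ^ (2 * k)) := by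
    intro a
    rw [← pow_mul]
    congr 1
    rw [two_mul, pow_add]
  have hKfix : ∀ a : F, a ≠ 0 → a ^ (3 ^ (2 * k)) = a → a = 1 ∨ a = -1 := by
    intro a ha h
    have h1le : 1 ≤ 3 ^ (2 * k) := Nat.one_le_pow _ _ (by norm_num)
    have h1 : a ^ (3 ^ (2 * k) - 1) = 1 := by
      have h2 : a ^ (3 ^ (2 * k) - 1) * a = 1 * a := by
        rw [one_mul, ← pow_succ, Nat.sub_add_cancel h1le]
        exact h
      exact mul_right_cancel₀ ha h2
    have hqq : a ^ (3 ^ n - 1) = 1 := by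
      have := FiniteField.pow_card_sub_one_eq_one a ha
      rwa [hF] at this
    have hdvd : orderOf a ∣ 2 :=
      st19_dvd_two _ _ _ hn0 hgcd2 (orderOf_dvd_of_pow_eq_one h1) (orderOf_dvd_of_pow_eq_one hqq)
    have ha2 : a ^ 2 = 1 := orderOf_dvd_iff_pow_eq_one.mp hdvd
    have hz : (a - 1) * (a + 1) = 0 := by linear_combination ha2
    rcases mul_eq_zero.mp hz with h' | h'
    · exact Or.inl (sub_eq_zero.mp h')
    · exact Or.inr (eq_neg_of_add_eq_zero_left h')
  have hd₂1 : ∀ a : F, a ^ d₂ = 1 → a = 1 := by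
    intro a h
    have ha : a ≠ 0 := by
      rintro rfl
      rw [zero_pow hd₂0] at h
      exact zero_ne_one h
    have h2 : a ^ (3 ^ k + 1) = 1 := by
      calc a ^ (3 ^ k + 1) = (a ^ d₂) ^ 2 := by rw [← pow_mul]; congr 1; omega
      _ = 1 := by rw [h]; ring
    have h3 : a ^ (3 ^ k) * a = 1 := by rw [← pow_succ]; exact h2
    have hinv : a ^ (3 ^ k) = a⁻¹ := eq_inv_of_mul_eq_one_left h3
    have h4 : a ^ (3 ^ (2 * k)) = a := by
      rw [← hpow2k, hinv, inv_pow, hinv, inv_inv]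
    rcases hKfix a ha h4 with h5 | h5
    · exact h5
    · exfalso
      rw [h5] at h
      rw [Odd.neg_one_pow hd₂odd] at h
      exact hne10 h.symm
  -- ## the function g
  set g : F → F := fun r => (1 - r ^ d₁) ^ d₂ / (1 - r ^ d₂) ^ d₁ with hgdef
  have hK3 : ∀ r : F, r ^ d₁ = r ∨ r ^ d₁ = -r := by
    intro r
    have h2 : (r ^ d₁) ^ 2 = r ^ 2 := by
      calc (r ^ d₁) ^ 2 = r ^ (3 ^ n) * r := by
            rw [← pow_mul, show d₁ * 2 = 3 ^ n + 1 by omega, pow_succ]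
      _ = r * r := by rw [hqp]
      _ = r ^ 2 := (sq r).symm
    have hz : (r ^ d₁ - r) * (r ^ d₁ + r) = 0 := by linear_combination h2
    rcases mul_eq_zero.mp hz with h | h
    · exact Or.inl (sub_eq_zero.mp h)
    · exact Or.inr (eq_neg_of_add_eq_zero_left h)
  -- ## structure lemma
  have hstruct : ∀ e r : F, (e = 1 ∨ e = -1) → r ≠ 0 → r ≠ 1 → r ≠ -1 → r ^ d₁ = e * r →
      ∃ t w : F, t ≠ 1 ∧ t ≠ -1 ∧ e * t ^ 2 = r ∧ w ^ 2 = 1 - (g r) ^ 2 ∧ w ≠ 0 ∧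
        e * t ^ (3 ^ k) * (1 - w * t) = t - w ∧ g r ≠ 0 := by
    intro e r he hr0 hr1 hrm hQ
    have he2 : e ^ 2 = 1 := by rcases he with h | h <;> rw [h] <;> ring
    set t := r ^ m₁ with htdef
    have ht2 : e * t ^ 2 = r := by
      have h : t ^ 2 = e * r := by
        rw [htdef, ← pow_mul, show m₁ * 2 = d₁ by omega, hQ]
      rw [h]
      linear_combination r * he2
    have ht0 : t ≠ 0 := by
      intro h
      apply hr0
      rw [← ht2, h]
      ring
    have ht1 : t ≠ 1 := by
      intro h
      rcases he with hh | hh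
      · apply hr1; rw [← ht2, h, hh]; ring
      · apply hrm; rw [← ht2, h, hh]; ring
    have htm : t ≠ -1 := by
      intro h
      rcases he with hh | hh
      · apply hr1; rw [← ht2, h, hh]; ring
      · apply hrm; rw [← ht2, h, hh]; ring
    have heK : e ^ (3 ^ k) = e := by
      rcases he with hh | hh
      · rw [hh, one_pow]
      · rw [hh]; exact Odd.neg_one_pow hoddK
    have hs : r ^ d₂ = e * (t * t ^ (3 ^ k)) := by
      rw [← ht2, mul_pow, ← pow_mul]
      have h1 : e ^ d₂ = e := by
        rcases he with hh | hh
        · rw [hh, one_pow]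
        · rw [hh]; exact Odd.neg_one_pow hd₂odd
      rw [h1]
      congr 1
      rw [show 2 * d₂ = 3 ^ k + 1 from h2d₂, pow_succ, mul_comm]
    set s := e * (t * t ^ (3 ^ k)) with hsdef
    have hs1 : (1 : F) - s ≠ 0 := by
      intro h
      have hs' : s = 1 := by linear_combination -h
      apply hr1
      exact hd₂1 r (by rw [hs, hs'])
    have hnum : 1 - r ^ d₁ = 1 - t ^ 2 := by
      rw [hQ, ← ht2]
      linear_combination (-(t ^ 2)) * he2
    have hB2 : ((1 - s) ^ d₁) ^ 2 = (1 - s) ^ 2 := by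
      rw [← pow_mul, show d₁ * 2 = 3 ^ n + 1 by omega, pow_succ, hqp]
      ring
    have hA2 : ((1 - t ^ 2) ^ d₂) ^ 2 = (1 - t ^ 2) * (1 - (t ^ (3 ^ k)) ^ 2) := by
      rw [← pow_mul, show d₂ * 2 = 3 ^ k + 1 by omega, pow_succ, hssub, one_pow,
        ← pow_mul, mul_comm 2 (3 ^ k), pow_mul]
      ring
    have hgr : g r = (1 - t ^ 2) ^ d₂ / (1 - s) ^ d₁ := by
      rw [hgdef]
      simp only
      rw [hnum, hs]
    have hBne : (1 - s) ^ d₁ ≠ 0 := pow_ne_zero _ hs1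
    have ht2ne : (1 : F) - t ^ 2 ≠ 0 := by
      intro h
      have hz : (t - 1) * (t + 1) = 0 := by linear_combination -h
      rcases mul_eq_zero.mp hz with h' | h'
      · exact ht1 (sub_eq_zero.mp h')
      · exact htm (eq_neg_of_add_eq_zero_left h')
    have hAne : (1 - t ^ 2) ^ d₂ ≠ 0 := pow_ne_zero _ ht2ne
    have hgne : g r ≠ 0 := by rw [hgr]; exact div_ne_zero hAne hBne
    set w := (t - e * t ^ (3 ^ k)) / (1 - s) with hwdef
    have hwnum : t - e * t ^ (3 ^ k) ≠ 0 := by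
      intro h
      have hte : t ^ (3 ^ k) = e * t := by
        linear_combination (-e) * h - t ^ (3 ^ k) * he2
      have ht2k : t ^ (3 ^ (2 * k)) = t := by
        rw [← hpow2k, hte, mul_pow, hte, heK]
        linear_combination t * he2
      rcases hKfix t ht0 ht2k with h' | h'
      · exact ht1 h'
      · exact htm h'
    have hw0 : w ≠ 0 := div_ne_zero hwnum hs1
    have hw2 : w ^ 2 = 1 - g r ^ 2 := by
      rw [hwdef, hgr, div_pow, div_pow, hA2, hB2]
      field_simp
      linear_combination ((t ^ (3 ^ k)) ^ 2 * (1 - t ^ 2)) * he2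
    have hrel : e * t ^ (3 ^ k) * (1 - w * t) = t - w := by
      have hws : w * (1 - s) = t - e * t ^ (3 ^ k) := by
        rw [hwdef]
        field_simp
      rw [hsdef] at hws
      linear_combination hws
    exact ⟨t, w, ht1, htm, ht2, hw2, hw0, hrel, hgne⟩
  -- ## g(r⁻¹) = -g(r)
  have hginv : ∀ r : F, r ≠ 0 → r ≠ 1 → g r⁻¹ = -g r := by
    intro r hr0 hr1
    have hd2ne : (1 : F) - r ^ d₂ ≠ 0 := fun h => hr1 (hd₂1 r (by linear_combination -h))
    have hA : 1 - (r ^ d₁)⁻¹ = -((1 - r ^ d₁) * (r ^ d₁)⁻¹) := by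
      field_simp
      ring
    have hB : 1 - (r ^ d₂)⁻¹ = -((1 - r ^ d₂) * (r ^ d₂)⁻¹) := by
      field_simp
      ring
    rw [hgdef]
    simp only
    rw [inv_pow, inv_pow, hA, hB, neg_pow ((1 - r ^ d₁) * (r ^ d₁)⁻¹),
      neg_pow ((1 - r ^ d₂) * (r ^ d₂)⁻¹), Odd.neg_one_pow hd₂odd,
      Even.neg_one_pow hd₁e, mul_pow, mul_pow]
    have h3 : ((r ^ d₁)⁻¹) ^ d₂ = ((r ^ d₂)⁻¹) ^ d₁ := by
      rw [inv_pow, inv_pow, ← pow_mul, ← pow_mul, mul_comm]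
    rw [h3, one_mul]
    have hC : ((r ^ d₂)⁻¹) ^ d₁ ≠ 0 :=
      pow_ne_zero _ (inv_ne_zero (pow_ne_zero _ hr0))
    have hD : (1 - r ^ d₂) ^ d₁ ≠ 0 := pow_ne_zero _ hd2ne
    field_simp
  -- ## injectivity within a class
  have hinj : ∀ e r₁ r₂ : F, (e = 1 ∨ e = -1) →
      r₁ ≠ 0 → r₁ ≠ 1 → r₁ ≠ -1 → r₂ ≠ 0 → r₂ ≠ 1 → r₂ ≠ -1 →
      r₁ ^ d₁ = e * r₁ → r₂ ^ d₁ = e * r₂ → g r₁ = g r₂ → r₁ = r₂ := by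
    intro e r₁ r₂ he h10 h11 h1m h20 h21 h2m hQ1 hQ2 hg12
    have he2 : e ^ 2 = 1 := by rcases he with h | h <;> rw [h] <;> ring
    have heK : e ^ (3 ^ k) = e := by
      rcases he with hh | hh
      · rw [hh, one_pow]
      · rw [hh]; exact Odd.neg_one_pow hoddK
    obtain ⟨t₁, w₁, ht11, ht1m, ht12, hw12, hw10, hrel1, hgne⟩ :=
      hstruct e r₁ he h10 h11 h1m hQ1
    obtain ⟨t₂, w₂, ht21, ht2m, ht22, hw22, hw20, hrel2, hgne2⟩ :=
      hstruct e r₂ he h20 h21 h2m hQ2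
    have hw2eq : (w₂ - w₁) * (w₂ + w₁) = 0 := by
      have h := hw22
      rw [← hg12, ← hw12] at h
      linear_combination h
    -- inner key lemma with common w
    have key : ∀ t₂' : F, t₂' ≠ 1 → t₂' ≠ -1 → e * t₂' ^ 2 = r₂ →
        e * t₂' ^ (3 ^ k) * (1 - w₁ * t₂') = t₂' - w₁ → r₁ = r₂ := by
      intro t₂ ht21 ht2m ht22 hrel2
      have hwn1 : (1 : F) - w₁ ≠ 0 := by
        intro h
        apply hgne
        have hw1 : w₁ = 1 := by linear_combination -h
        have : g r₁ ^ 2 = 0 := by rw [hw1] at hw12; linear_combination hw12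
        exact pow_eq_zero_iff (n := 2) (by norm_num) |>.mp this
      have hwp1 : (1 : F) + w₁ ≠ 0 := by
        intro h
        apply hgne
        have hw1 : w₁ = -1 := by linear_combination h
        have : g r₁ ^ 2 = 0 := by rw [hw1] at hw12; linear_combination hw12
        exact pow_eq_zero_iff (n := 2) (by norm_num) |>.mp this
      have h1wt : ∀ t : F, t ≠ 1 → t ≠ -1 →
          e * t ^ (3 ^ k) * (1 - w₁ * t) = t - w₁ → 1 - w₁ * t ≠ 0 := by
        intro t ht1 htm hrel h
        rw [h, mul_zero] at hrel
        have htw : t = w₁ := by linear_combination -hrel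
        rw [htw] at h
        -- 1 - w₁ ^ 2 = 0 → t = ±1
        have hz : (w₁ - 1) * (w₁ + 1) = 0 := by linear_combination -h
        rcases mul_eq_zero.mp hz with h' | h'
        · exact ht1 (htw.trans (sub_eq_zero.mp h'))
        · exact htm (htw.trans (eq_neg_of_add_eq_zero_left h'))
      have hd11 : (1 : F) - t₁ ≠ 0 := sub_ne_zero.mpr (fun h => ht11 h.symm)
      have hd12 : (1 : F) + t₁ ≠ 0 := fun h => ht1m (by linear_combination h)
      have hd21 : (1 : F) - t₂ ≠ 0 := sub_ne_zero.mpr (fun h => ht21 h.symm)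
      have hd22 : (1 : F) + t₂ ≠ 0 := fun h => ht2m (by linear_combination h)
      have hwt1 : 1 - w₁ * t₁ ≠ 0 := h1wt t₁ ht11 ht1m hrel1
      have hwt2 : 1 - w₁ * t₂ ≠ 0 := h1wt t₂ ht21 ht2m hrel2
      set ξ : F := ((1 + t₂) * (1 - t₁)) / ((1 - t₂) * (1 + t₁)) with hxidef
      have hxine : (1 - t₂) * (1 + t₁) ≠ 0 := mul_ne_zero hd21 hd12
      have hxinum : (1 + t₂) * (1 - t₁) ≠ 0 := mul_ne_zero hd22 hd11
      have hξ0 : ξ ≠ 0 := div_ne_zero hxinum hxine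
      -- Frobenius formulas
      have hform1 : t₁ ^ (3 ^ k) = e * (t₁ - w₁) / (1 - w₁ * t₁) := by
        rw [eq_div_iff hwt1]
        linear_combination e * hrel1 - (t₁ ^ (3 ^ k) * (1 - w₁ * t₁)) * he2
      have hform2 : t₂ ^ (3 ^ k) = e * (t₂ - w₁) / (1 - w₁ * t₂) := by
        rw [eq_div_iff hwt2]
        linear_combination e * hrel2 - (t₂ ^ (3 ^ k) * (1 - w₁ * t₂)) * he2
      have hsx : ξ ^ (3 ^ k) =
          ((1 + t₂ ^ (3 ^ k)) * (1 - t₁ ^ (3 ^ k))) /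
            ((1 - t₂ ^ (3 ^ k)) * (1 + t₁ ^ (3 ^ k))) := by
        rw [hxidef, div_pow, mul_pow, mul_pow, hsadd, hssub, hsadd, hssub, one_pow]
      have hfrne : ∀ a b : F, a ≠ b → a ^ (3 ^ k) ≠ b ^ (3 ^ k) := by
        intro a b hab h
        have h0 : (a - b) ^ (3 ^ k) = 0 := by rw [hssub, h, sub_self]
        have h1 : a - b = 0 := pow_eq_zero_iff (n := 3 ^ k) (by positivity) |>.mp h0
        exact hab (sub_eq_zero.mp h1)
      have hn2σ : (1 : F) - t₂ ^ (3 ^ k) ≠ 0 := by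
        have h := hfrne t₂ 1 ht21
        rw [one_pow] at h
        exact fun hh => h (by linear_combination -hh)
      have hp1σ : (1 : F) + t₁ ^ (3 ^ k) ≠ 0 := by
        have h := hfrne t₁ (-1) ht1m
        rw [hnegK 1, one_pow] at h
        exact fun hh => h (by linear_combination hh)
      have hxicase : ξ ^ (3 ^ (2 * k)) = ξ := by
        rcases he with rfl | rfl
        · have hp2 : (1 + t₂ ^ (3 ^ k)) * (1 - w₁ * t₂) = (1 + t₂) * (1 - w₁) := by
            linear_combination hrel2
          have hm2 : (1 - t₂ ^ (3 ^ k)) * (1 - w₁ * t₂) = (1 - t₂) * (1 + w₁) := by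
            linear_combination -hrel2
          have hp1 : (1 + t₁ ^ (3 ^ k)) * (1 - w₁ * t₁) = (1 + t₁) * (1 - w₁) := by
            linear_combination hrel1
          have hm1 : (1 - t₁ ^ (3 ^ k)) * (1 - w₁ * t₁) = (1 - t₁) * (1 + w₁) := by
            linear_combination -hrel1
          have hstep : ξ ^ (3 ^ k) = ξ := by
            rw [hsx, hxidef, div_eq_div_iff (mul_ne_zero hn2σ hp1σ) hxine]
            apply mul_right_cancel₀ (mul_ne_zero hwt1 hwt2)
            linear_combination
              ((1 - t₁ ^ (3 ^ k)) * (1 - w₁ * t₁) * ((1 - t₂) * (1 + t₁))) * hp2 +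
              ((1 + t₂) * (1 - w₁) * ((1 - t₂) * (1 + t₁))) * hm1 -
              ((1 + t₂) * (1 - t₁) * ((1 + t₁ ^ (3 ^ k)) * (1 - w₁ * t₁))) * hm2 -
              ((1 + t₂) * (1 - t₁) * ((1 - t₂) * (1 + w₁))) * hp1
          rw [← hpow2k, hstep, hstep]
        · have hp2 : (1 + t₂ ^ (3 ^ k)) * (1 - w₁ * t₂) = (1 - t₂) * (1 + w₁) := by
            linear_combination -hrel2
          have hm2 : (1 - t₂ ^ (3 ^ k)) * (1 - w₁ * t₂) = (1 + t₂) * (1 - w₁) := by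
            linear_combination hrel2
          have hp1 : (1 + t₁ ^ (3 ^ k)) * (1 - w₁ * t₁) = (1 - t₁) * (1 + w₁) := by
            linear_combination -hrel1
          have hm1 : (1 - t₁ ^ (3 ^ k)) * (1 - w₁ * t₁) = (1 + t₁) * (1 - w₁) := by
            linear_combination hrel1
          have hstep : ξ ^ (3 ^ k) = ξ⁻¹ := by
            rw [hsx, hxidef, inv_div,
              div_eq_div_iff (mul_ne_zero hn2σ hp1σ) hxinum]
            apply mul_right_cancel₀ (mul_ne_zero hwt1 hwt2)
            linear_combination
              ((1 - t₁ ^ (3 ^ k)) * (1 - w₁ * t₁) * ((1 + t₂) * (1 - t₁))) * hp2 +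
              ((1 - t₂) * (1 + w₁) * ((1 + t₂) * (1 - t₁))) * hm1 -
              ((1 - t₂) * (1 + t₁) * ((1 + t₁ ^ (3 ^ k)) * (1 - w₁ * t₁))) * hm2 -
              ((1 - t₂) * (1 + t₁) * ((1 + t₂) * (1 - w₁))) * hp1
          rw [← hpow2k, hstep, inv_pow, hstep, inv_inv]
      rcases hKfix ξ hξ0 hxicase with hxi | hxi
      · rw [hxidef, div_eq_one_iff_eq hxine] at hxi
        have htt : t₁ = t₂ := by linear_combination hxi + (t₁ - t₂) * h3F
        rw [← ht12, ← ht22, htt]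
      · exfalso
        rw [hxidef, div_eq_iff hxine] at hxi
        have htt : t₁ * t₂ = 1 := by linear_combination hxi + (t₁ * t₂ - 1) * h3F
        have hr12 : r₁ * r₂ = 1 := by
          rw [← ht12, ← ht22]
          linear_combination (t₁ ^ 2 * t₂ ^ 2) * he2 + (t₁ * t₂ + 1) * htt
        have hr2inv : r₂ = r₁⁻¹ := eq_inv_of_mul_eq_one_right hr12
        have hgr2 : g r₂ = -g r₁ := by rw [hr2inv]; exact hginv r₁ h10 h11
        apply hgne
        have hcc : g r₁ = -g r₁ := hg12.trans hgr2
        linear_combination -hcc + g r₁ * h3F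
    rcases mul_eq_zero.mp hw2eq with h | h
    · exact key t₂ ht21 ht2m ht22 (by rw [sub_eq_zero.mp h] at hrel2; exact hrel2)
    · have hw2w1 : w₂ = -w₁ := eq_neg_of_add_eq_zero_left h
      apply key (-t₂)
      · intro hh; exact ht2m (by linear_combination -hh)
      · intro hh; exact ht21 (by linear_combination -hh)
      · rw [← ht22]; ring
      · rw [hnegK t₂]
        rw [hw2w1] at hrel2
        linear_combination -hrel2
  have habc : ∀ A B C : F, C ≠ 0 → A / C / (B / C) = A / B := by
    intro A B C hC
    rcases eq_or_ne B 0 with rfl | hB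
    · simp
    · field_simp
  -- ## -1 is not a square
  have hm1nsq : ¬ IsSquare (-1 : F) := by
    rintro ⟨j, hj⟩
    have hj0 : j ≠ 0 := by
      rintro rfl
      rw [mul_zero] at hj
      exact neg_ne_zero.mpr (one_ne_zero (α := F)) hj
    have hj2 : j ^ 2 = -1 := by rw [sq]; exact hj.symm
    have hj4 : j ^ 4 = 1 := by
      have h : j ^ 4 = (j ^ 2) ^ 2 := by ring
      rw [h, hj2]; ring
    obtain ⟨b, hb⟩ := h4n
    have hexp : 3 ^ n - 1 = 4 * (b - 1) + 2 := by omega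
    have hj1 := FiniteField.pow_card_sub_one_eq_one j hj0
    rw [hF, hexp, pow_add, pow_mul, hj4, one_pow, one_mul, hj2] at hj1
    exact hne10 hj1.symm
  -- ## counting squares
  set U : Finset F := Finset.univ.filter (fun x => x ≠ 0) with hUdef
  have hUcard : U.card = 3 ^ n - 1 := by
    rw [hUdef, Finset.filter_ne', Finset.card_erase_of_mem (Finset.mem_univ 0),
      Finset.card_univ, hF]
  set SQ : Finset F := Finset.univ.filter (fun a => a ≠ 0 ∧ IsSquare a) with hSQdef
  have hUim : U.image (fun x => x ^ 2) = SQ := by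
    ext a
    simp only [hUdef, hSQdef, Finset.mem_image, Finset.mem_filter, Finset.mem_univ, true_and]
    constructor
    · rintro ⟨x, hx, rfl⟩
      exact ⟨pow_ne_zero _ hx, ⟨x, sq x⟩⟩
    · rintro ⟨ha0, y, hy⟩
      refine ⟨y, ?_, ?_⟩
      · rintro rfl; rw [mul_zero] at hy; exact ha0 hy
      · rw [hy, sq]
  have hSQ2 : 2 * SQ.card = 3 ^ n - 1 := by
    have hfib : ∀ b ∈ U.image (fun x => x ^ 2), (U.filter (fun x => x ^ 2 = b)).card = 2 := by
      intro b hb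
      rw [Finset.mem_image] at hb
      obtain ⟨x, hxU, rfl⟩ := hb
      rw [hUdef, Finset.mem_filter] at hxU
      have hx0 : x ≠ 0 := hxU.2
      have hset : U.filter (fun y => y ^ 2 = x ^ 2) = {x, -x} := by
        ext y
        simp only [hUdef, Finset.mem_filter, Finset.mem_univ, true_and,
          Finset.mem_insert, Finset.mem_singleton]
        constructor
        · rintro ⟨hy0, hyx⟩
          have hz : (y - x) * (y + x) = 0 := by linear_combination hyx
          rcases mul_eq_zero.mp hz with h | h
          · exact Or.inl (sub_eq_zero.mp h)
          · exact Or.inr (eq_neg_of_add_eq_zero_left h)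
        · rintro (rfl | rfl)
          · exact ⟨hx0, rfl⟩
          · exact ⟨neg_ne_zero.mpr hx0, by ring⟩
      rw [hset, Finset.card_insert_of_notMem, Finset.card_singleton]
      simp only [Finset.mem_singleton]
      intro h
      exact hx0 (by linear_combination -h + x * h3F)
    have hcalc : U.card = 2 * SQ.card := by
      calc U.card = ∑ b ∈ U.image (fun x => x ^ 2), (U.filter (fun x => x ^ 2 = b)).card :=
            Finset.card_eq_sum_card_image _ _
      _ = ∑ _b ∈ U.image (fun x => x ^ 2), 2 := Finset.sum_congr rfl hfib
      _ = 2 * (U.image (fun x => x ^ 2)).card := by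
            rw [Finset.sum_const, smul_eq_mul, mul_comm]
      _ = 2 * SQ.card := by rw [hUim]
    omega
  -- ## the target value set S
  set Sset : Finset F :=
    Finset.univ.filter (fun c => c ≠ 0 ∧ c ≠ 1 ∧ c ≠ -1 ∧ IsSquare (1 - c ^ 2)) with hSdef
  have hSQ1mem : (1 : F) ∈ SQ := by
    simp only [hSQdef, Finset.mem_filter, Finset.mem_univ, true_and]
    exact ⟨one_ne_zero, IsSquare.one⟩
  have hScard : Sset.card = SQ.card - 1 := by
    rw [← Finset.card_erase_of_mem hSQ1mem]
    apply Finset.card_bij (fun c _ => (1 - c) / (1 + c))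
    · intro c hc
      simp only [hSdef, Finset.mem_filter, Finset.mem_univ, true_and] at hc
      obtain ⟨hc0, hc1, hcm, hsq⟩ := hc
      have h1c : (1 : F) + c ≠ 0 := fun h => hcm (by linear_combination h)
      have h1c' : (1 : F) - c ≠ 0 := sub_ne_zero.mpr (fun h => hc1 h.symm)
      rw [Finset.mem_erase]
      constructor
      · intro h
        rw [div_eq_one_iff_eq h1c] at h
        exact hc0 (by linear_combination h + c * h3F)
      · simp only [hSQdef, Finset.mem_filter, Finset.mem_univ, true_and]
        refine ⟨div_ne_zero h1c' h1c, ?_⟩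
        obtain ⟨y, hy⟩ := hsq
        refine ⟨y / (1 + c), ?_⟩
        rw [div_mul_div_comm, div_eq_div_iff h1c (mul_ne_zero h1c h1c)]
        linear_combination (1 + c) * hy
    · intro c₁ h₁ c₂ h₂ h
      simp only [hSdef, Finset.mem_filter, Finset.mem_univ, true_and] at h₁ h₂
      have h1c₁ : (1 : F) + c₁ ≠ 0 := fun hh => h₁.2.2.1 (by linear_combination hh)
      have h1c₂ : (1 : F) + c₂ ≠ 0 := fun hh => h₂.2.2.1 (by linear_combination hh)
      rw [div_eq_div_iff h1c₁ h1c₂] at h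
      linear_combination h + (c₁ - c₂) * h3F
    · intro a ha
      rw [Finset.mem_erase] at ha
      obtain ⟨ha1, haSQ⟩ := ha
      simp only [hSQdef, Finset.mem_filter, Finset.mem_univ, true_and] at haSQ
      obtain ⟨ha0, hasq⟩ := haSQ
      have ham : a ≠ -1 := fun h => hm1nsq (h ▸ hasq)
      have h1a : (1 : F) + a ≠ 0 := fun h => ham (by linear_combination h)
      refine ⟨(1 - a) / (1 + a), ?_, ?_⟩
      · simp only [hSdef, Finset.mem_filter, Finset.mem_univ, true_and]
        refine ⟨?_, ?_, ?_, ?_⟩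
        · exact div_ne_zero (sub_ne_zero.mpr (fun h => ha1 h.symm)) h1a
        · intro h
          rw [div_eq_one_iff_eq h1a] at h
          exact ha0 (by linear_combination h + a * h3F)
        · intro h
          rw [div_eq_iff h1a] at h
          exact one_ne_zero (α := F) (by linear_combination h3F - h)
        · obtain ⟨y, hy⟩ := hasq
          refine ⟨(2 * y) / (1 + a), ?_⟩
          rw [div_mul_div_comm]
          rw [eq_div_iff (mul_ne_zero h1a h1a)]
          have hgoal : (1 - ((1 - a) / (1 + a)) ^ 2) * ((1 + a) * (1 + a)) = 4 * a := by
            field_simp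
            ring
          rw [hgoal]
          linear_combination 4 * hy
      · have hnum : 1 - (1 - a) / (1 + a) = (2 * a) / (1 + a) := by
          field_simp
          ring
        have hden : 1 + (1 - a) / (1 + a) = 2 / (1 + a) := by
          field_simp
          ring
        rw [hnum, hden, habc _ _ _ h1a, mul_div_cancel_left₀ a h2ne]
  have hSsetcard2 : 2 * Sset.card = 3 ^ n - 3 := by
    have h1SQ : 1 ≤ SQ.card := Finset.card_pos.mpr ⟨1, hSQ1mem⟩
    omega
  -- ## Q and N classes
  set Qset : Finset F :=
    Finset.univ.filter (fun r => (r ≠ 0 ∧ r ≠ 1 ∧ r ≠ -1) ∧ r ^ d₁ = r) with hQdef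
  set Nset : Finset F :=
    Finset.univ.filter (fun r => (r ≠ 0 ∧ r ≠ 1 ∧ r ≠ -1) ∧ r ^ d₁ = -r) with hNdef
  have hdisj : Disjoint Qset Nset := by
    rw [Finset.disjoint_left]
    intro r hrQ hrN
    simp only [hQdef, hNdef, Finset.mem_filter, Finset.mem_univ, true_and] at hrQ hrN
    have h : r = -r := hrQ.2.symm.trans hrN.2
    exact hrQ.1.1 (by linear_combination -h + r * h3F)
  have hunion : Qset ∪ Nset = Finset.univ.filter (fun r : F => r ≠ 0 ∧ r ≠ 1 ∧ r ≠ -1) := by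
    ext r
    simp only [Finset.mem_union, hQdef, hNdef, Finset.mem_filter, Finset.mem_univ, true_and]
    constructor
    · rintro (⟨h, _⟩ | ⟨h, _⟩) <;> exact h
    · intro h
      rcases hK3 r with hh | hh
      · exact Or.inl ⟨h, hh⟩
      · exact Or.inr ⟨h, hh⟩
  have hTcard : (Finset.univ.filter (fun r : F => r ≠ 0 ∧ r ≠ 1 ∧ r ≠ -1)).card = 3 ^ n - 3 := by
    have hset : Finset.univ.filter (fun r : F => r ≠ 0 ∧ r ≠ 1 ∧ r ≠ -1) =
        Finset.univ \ {0, 1, -1} := by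
      ext r
      simp only [Finset.mem_filter, Finset.mem_univ, true_and, Finset.mem_sdiff,
        Finset.mem_insert, Finset.mem_singleton]
      tauto
    have hc3 : ({0, 1, -1} : Finset F).card = 3 := by
      rw [Finset.card_insert_of_notMem, Finset.card_insert_of_notMem,
        Finset.card_singleton]
      · simp only [Finset.mem_singleton]
        exact hne10
      · simp only [Finset.mem_insert, Finset.mem_singleton]
        push_neg
        refine ⟨fun h => one_ne_zero (α := F) h.symm, fun h => ?_⟩
        exact one_ne_zero (α := F) (neg_eq_zero.mp h.symm)
    rw [hset, Finset.card_sdiff_of_subset (Finset.subset_univ _), Finset.card_univ, hF, hc3]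
  have hcards : Qset.card + Nset.card = 3 ^ n - 3 := by
    rw [← hTcard, ← hunion, Finset.card_union_of_disjoint hdisj]
  -- ## images
  have hQsub : Qset.image g ⊆ Sset := by
    intro c hc
    rw [Finset.mem_image] at hc
    obtain ⟨r, hr, rfl⟩ := hc
    simp only [hQdef, Finset.mem_filter, Finset.mem_univ, true_and] at hr
    obtain ⟨⟨h0, h1, hm⟩, hQ⟩ := hr
    obtain ⟨t, w, _, _, _, hw2, hw0, _, hgne⟩ :=
      hstruct 1 r (Or.inl rfl) h0 h1 hm (by rw [one_mul]; exact hQ)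
    have hnz : 1 - g r ^ 2 ≠ 0 := by rw [← hw2]; exact pow_ne_zero _ hw0
    simp only [hSdef, Finset.mem_filter, Finset.mem_univ, true_and]
    exact ⟨hgne, fun h => hnz (by rw [h]; ring), fun h => hnz (by rw [h]; ring),
      ⟨w, by rw [← hw2]; ring⟩⟩
  have hNsub : Nset.image g ⊆ Sset := by
    intro c hc
    rw [Finset.mem_image] at hc
    obtain ⟨r, hr, rfl⟩ := hc
    simp only [hNdef, Finset.mem_filter, Finset.mem_univ, true_and] at hr
    obtain ⟨⟨h0, h1, hm⟩, hQ⟩ := hr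
    obtain ⟨t, w, _, _, _, hw2, hw0, _, hgne⟩ :=
      hstruct (-1) r (Or.inr rfl) h0 h1 hm (by rw [neg_one_mul]; exact hQ)
    have hnz : 1 - g r ^ 2 ≠ 0 := by rw [← hw2]; exact pow_ne_zero _ hw0
    simp only [hSdef, Finset.mem_filter, Finset.mem_univ, true_and]
    exact ⟨hgne, fun h => hnz (by rw [h]; ring), fun h => hnz (by rw [h]; ring),
      ⟨w, by rw [← hw2]; ring⟩⟩
  have hQim : (Qset.image g).card = Qset.card := by
    apply Finset.card_image_of_injOn
    intro r₁ h₁ r₂ h₂ h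
    simp only [Finset.mem_coe, hQdef, Finset.mem_filter, Finset.mem_univ, true_and] at h₁ h₂
    exact hinj 1 r₁ r₂ (Or.inl rfl) h₁.1.1 h₁.1.2.1 h₁.1.2.2 h₂.1.1 h₂.1.2.1 h₂.1.2.2
      (by rw [one_mul]; exact h₁.2) (by rw [one_mul]; exact h₂.2) h
  have hNim : (Nset.image g).card = Nset.card := by
    apply Finset.card_image_of_injOn
    intro r₁ h₁ r₂ h₂ h
    simp only [Finset.mem_coe, hNdef, Finset.mem_filter, Finset.mem_univ, true_and] at h₁ h₂
    exact hinj (-1) r₁ r₂ (Or.inr rfl) h₁.1.1 h₁.1.2.1 h₁.1.2.2 h₂.1.1 h₂.1.2.1 h₂.1.2.2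
      (by rw [neg_one_mul]; exact h₁.2) (by rw [neg_one_mul]; exact h₂.2) h
  have hQle : Qset.card ≤ Sset.card := by
    rw [← hQim]; exact Finset.card_le_card hQsub
  have hNle : Nset.card ≤ Sset.card := by
    rw [← hNim]; exact Finset.card_le_card hNsub
  have hQeqc : Qset.card = Sset.card := by omega
  have hNeqc : Nset.card = Sset.card := by omega
  have hQeq : Qset.image g = Sset :=
    Finset.eq_of_subset_of_card_le hQsub (by rw [hQim, hQeqc])
  have hNeq : Nset.image g = Sset :=
    Finset.eq_of_subset_of_card_le hNsub (by rw [hNim, hNeqc])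
  -- ## f₄ evaluations at 0, 1, -1
  have hf0 : f₄ 0 = 0 := by
    rw [hf₄ 0, show (0:F) + 2 = -1 by linear_combination h3F,
      show (0:F) - 2 = 1 by linear_combination -h3F]
    rw [Even.neg_one_pow hd₁e, one_pow, sub_self, zero_pow hd₂0, zero_div]
  have hf1 : f₄ 1 = -1 := by
    rw [hf₄ 1, show (1:F) + 2 = 0 by linear_combination h3F,
      show (1:F) - 2 = -1 by norm_num]
    rw [zero_pow hd₁0, zero_pow hd₂0, Even.neg_one_pow hd₁e, Odd.neg_one_pow hd₂odd,
      zero_sub, zero_sub, neg_neg, Odd.neg_one_pow hd₂odd, one_pow, div_one]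
  have hfm1 : f₄ (-1) = 1 := by
    rw [hf₄ (-1), show (-1:F) + 2 = 1 by norm_num,
      show (-1:F) - 2 = 0 by linear_combination -h3F]
    simp [zero_pow hd₁0, zero_pow hd₂0]
  -- ## the substitution r = (x+1)/(x-1)
  have hfg : ∀ x : F, x ≠ 1 → f₄ x = g ((x + 1) / (x - 1)) := by
    intro x hx
    have hu : x - 1 ≠ 0 := sub_ne_zero.mpr hx
    have hu' : ∀ m : ℕ, (x - 1) ^ m ≠ 0 := fun m => pow_ne_zero m hu
    rw [hf₄ x, show x + 2 = x - 1 by linear_combination h3F,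
      show x - 2 = x + 1 by linear_combination -h3F]
    rw [hgdef]
    simp only
    have h1 : ∀ m : ℕ, 1 - ((x + 1) / (x - 1)) ^ m =
        ((x - 1) ^ m - (x + 1) ^ m) / (x - 1) ^ m := by
      intro m
      rw [div_pow, eq_div_iff (hu' m), sub_mul, one_mul, div_mul_cancel₀ _ (hu' m)]
    rw [h1 d₁, h1 d₂, div_pow, div_pow, ← pow_mul, ← pow_mul,
      show d₂ * d₁ = d₁ * d₂ from mul_comm _ _, habc _ _ _ (hu' (d₁ * d₂))]
  have hρT : ∀ x : F, x ≠ 0 → x ≠ 1 → x ≠ -1 →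
      ((x + 1) / (x - 1) ≠ 0 ∧ (x + 1) / (x - 1) ≠ 1 ∧ (x + 1) / (x - 1) ≠ -1) := by
    intro x h0 h1 hm
    have hu : x - 1 ≠ 0 := sub_ne_zero.mpr h1
    refine ⟨div_ne_zero (fun h => hm (by linear_combination h)) hu, ?_, ?_⟩
    · intro h
      rw [div_eq_one_iff_eq hu] at h
      exact one_ne_zero (α := F) (by linear_combination h3F - h)
    · intro h
      rw [div_eq_iff hu] at h
      exact h0 (by linear_combination -h + x * h3F)
  have hρinv : ∀ x : F, x ≠ 1 → ((x + 1) / (x - 1) + 1) / ((x + 1) / (x - 1) - 1) = x := by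
    intro x h1
    have hu : x - 1 ≠ 0 := sub_ne_zero.mpr h1
    have hnum : (x + 1) / (x - 1) + 1 = (2 * x) / (x - 1) := by
      field_simp
      ring
    have hden : (x + 1) / (x - 1) - 1 = 2 / (x - 1) := by
      field_simp
      ring
    rw [hnum, hden, habc _ _ _ hu, mul_div_cancel_left₀ x h2ne]
  have hval : ∀ x : F, x ≠ 0 → x ≠ 1 → x ≠ -1 → f₄ x ∈ Sset := by
    intro x h0 h1 hm
    obtain ⟨hr0, hr1, hrm⟩ := hρT x h0 h1 hm
    rw [hfg x h1]
    rcases hK3 ((x + 1) / (x - 1)) with hh | hh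
    · apply hQsub
      rw [Finset.mem_image]
      refine ⟨(x + 1) / (x - 1), ?_, rfl⟩
      simp only [hQdef, Finset.mem_filter, Finset.mem_univ, true_and]
      exact ⟨⟨hr0, hr1, hrm⟩, hh⟩
    · apply hNsub
      rw [Finset.mem_image]
      refine ⟨(x + 1) / (x - 1), ?_, rfl⟩
      simp only [hNdef, Finset.mem_filter, Finset.mem_univ, true_and]
      exact ⟨⟨hr0, hr1, hrm⟩, hh⟩
  have hSnotF3 : ∀ x : F, x ≠ 0 → x ≠ 1 → x ≠ -1 →
      (f₄ x ≠ 0 ∧ f₄ x ≠ 1 ∧ f₄ x ≠ -1) := by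
    intro x h0 h1 hm
    have h := hval x h0 h1 hm
    simp only [hSdef, Finset.mem_filter, Finset.mem_univ, true_and] at h
    exact ⟨h.1, h.2.1, h.2.2.1⟩
  -- ## conclusion
  constructor
  · intro c hc
    have hsingle : ∀ x₀ : F, f₄ x₀ = c → (∀ x : F, f₄ x = c → x = x₀) →
        Nat.card {x : F // f₄ x = c} = 1 := by
      intro x₀ h₀ hu
      have hiff : ∀ x : F, f₄ x = c ↔ x ∈ ({x₀} : Set F) := by
        intro x
        simp only [Set.mem_singleton_iff]
        exact ⟨hu x, fun h => h ▸ h₀⟩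
      calc Nat.card {x : F // f₄ x = c}
          = Nat.card {x : F // x ∈ ({x₀} : Set F)} :=
            Nat.card_congr (Equiv.subtypeEquivRight hiff)
      _ = ({x₀} : Set F).ncard := Nat.card_coe_set_eq _
      _ = 1 := Set.ncard_singleton x₀
    rcases hc with rfl | rfl | rfl
    · apply hsingle 0 hf0
      intro x hx
      by_contra hx0
      rcases eq_or_ne x 1 with rfl | hx1
      · rw [hf1] at hx; exact neg_ne_zero.mpr (one_ne_zero (α := F)) hx
      rcases eq_or_ne x (-1) with rfl | hxm
      · rw [hfm1] at hx; exact one_ne_zero hx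
      exact (hSnotF3 x hx0 hx1 hxm).1 hx
    · apply hsingle (-1) hfm1
      intro x hx
      rcases eq_or_ne x 0 with rfl | hx0
      · rw [hf0] at hx; exact absurd hx.symm one_ne_zero
      rcases eq_or_ne x 1 with rfl | hx1
      · rw [hf1] at hx; exact absurd hx.symm hne10
      by_contra hxm
      exact (hSnotF3 x hx0 hx1 hxm).2.1 hx
    · apply hsingle 1 hf1
      intro x hx
      rcases eq_or_ne x 0 with rfl | hx0
      · rw [hf0] at hx
        exact absurd hx (fun h => neg_ne_zero.mpr (one_ne_zero (α := F)) h.symm)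
      by_contra hx1
      rcases eq_or_ne x (-1) with rfl | hxm
      · rw [hfm1] at hx; exact hne10 hx
      exact (hSnotF3 x hx0 hx1 hxm).2.2 hx
  · intro c hc
    push_neg at hc
    obtain ⟨hc0, hc1, hcm⟩ := hc
    have hc2 : 1 - c ^ 2 ≠ 0 := by
      intro h
      have hz : (1 - c) * (1 + c) = 0 := by linear_combination h
      rcases mul_eq_zero.mp hz with h' | h'
      · exact hc1 (by linear_combination -h')
      · exact hcm (by linear_combination h')
    by_cases hsq : IsSquare (1 - c ^ 2)
    · have hcS : c ∈ Sset := by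
        simp only [hSdef, Finset.mem_filter, Finset.mem_univ, true_and]
        exact ⟨hc0, hc1, hcm, hsq⟩
      obtain ⟨r₁, hr₁, hgr₁⟩ := Finset.mem_image.mp (hQeq ▸ hcS : c ∈ Qset.image g)
      obtain ⟨r₂, hr₂, hgr₂⟩ := Finset.mem_image.mp (hNeq ▸ hcS : c ∈ Nset.image g)
      simp only [hQdef, Finset.mem_filter, Finset.mem_univ, true_and] at hr₁
      simp only [hNdef, Finset.mem_filter, Finset.mem_univ, true_and] at hr₂
      obtain ⟨⟨h10, h11, h1m⟩, hQ1⟩ := hr₁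
      obtain ⟨⟨h20, h21, h2m⟩, hQ2⟩ := hr₂
      obtain ⟨hx₁0, hx₁1, hx₁m⟩ := hρT r₁ h10 h11 h1m
      obtain ⟨hx₂0, hx₂1, hx₂m⟩ := hρT r₂ h20 h21 h2m
      set x₁ := (r₁ + 1) / (r₁ - 1) with hx₁
      set x₂ := (r₂ + 1) / (r₂ - 1) with hx₂
      have hfx₁ : f₄ x₁ = c := by rw [hfg x₁ hx₁1, hρinv r₁ h11, hgr₁]
      have hfx₂ : f₄ x₂ = c := by rw [hfg x₂ hx₂1, hρinv r₂ h21, hgr₂]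
      have hx12 : x₁ ≠ x₂ := by
        intro h
        have hrr : r₁ = r₂ := by
          have e1 := hρinv r₁ h11
          have e2 := hρinv r₂ h21
          rw [← e1, ← e2, ← hx₁, ← hx₂, h]
        rw [hrr] at hQ1
        have h' : r₂ = -r₂ := hQ1.symm.trans hQ2
        exact h20 (by linear_combination -h' + r₂ * h3F)
      have hiff : ∀ x : F, f₄ x = c ↔ x ∈ ({x₁, x₂} : Set F) := by
        intro x
        simp only [Set.mem_insert_iff, Set.mem_singleton_iff]
        constructor
        · intro hx
          rcases eq_or_ne x 0 with rfl | h0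
          · rw [hf0] at hx; exact absurd hx.symm hc0
          rcases eq_or_ne x 1 with rfl | h1
          · rw [hf1] at hx; exact absurd hx.symm hcm
          rcases eq_or_ne x (-1) with rfl | hm
          · rw [hfm1] at hx; exact absurd hx.symm hc1
          obtain ⟨hr0, hr1, hrm⟩ := hρT x h0 h1 hm
          have hgr : g ((x + 1) / (x - 1)) = c := by rw [← hfg x h1]; exact hx
          have hxr := hρinv x h1
          rcases hK3 ((x + 1) / (x - 1)) with hh | hh
          · left
            have hre : (x + 1) / (x - 1) = r₁ := hinj 1 _ r₁ (Or.inl rfl) hr0 hr1 hrm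
              h10 h11 h1m (by rw [one_mul]; exact hh) (by rw [one_mul]; exact hQ1)
              (by rw [hgr, hgr₁])
            rw [← hxr, hre]
          · right
            have hre : (x + 1) / (x - 1) = r₂ := hinj (-1) _ r₂ (Or.inr rfl) hr0 hr1 hrm
              h20 h21 h2m (by rw [neg_one_mul]; exact hh) (by rw [neg_one_mul]; exact hQ2)
              (by rw [hgr, hgr₂])
            rw [← hxr, hre]
        · rintro (rfl | rfl)
          · exact hfx₁
          · exact hfx₂
      have hcard2 : Nat.card {x : F // f₄ x = c} = 2 := by
        calc Nat.card {x : F // f₄ x = c}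
            = Nat.card {x : F // x ∈ ({x₁, x₂} : Set F)} :=
              Nat.card_congr (Equiv.subtypeEquivRight hiff)
        _ = ({x₁, x₂} : Set F).ncard := Nat.card_coe_set_eq _
        _ = 2 := Set.ncard_pair hx12
      rw [hcard2, (hη (1 - c ^ 2) hc2).1 hsq]
      norm_num
    · have hnone : ∀ x : F, f₄ x ≠ c := by
        intro x hx
        rcases eq_or_ne x 0 with rfl | h0
        · rw [hf0] at hx; exact hc0 hx.symm
        rcases eq_or_ne x 1 with rfl | h1
        · rw [hf1] at hx; exact hcm hx.symm
        rcases eq_or_ne x (-1) with rfl | hm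
        · rw [hfm1] at hx; exact hc1 hx.symm
        have h := hval x h0 h1 hm
        rw [hx] at h
        simp only [hSdef, Finset.mem_filter, Finset.mem_univ, true_and] at h
        exact hsq h.2.2.2
      haveI : IsEmpty {x : F // f₄ x = c} := ⟨fun y => hnone y.1 y.2⟩
      rw [Nat.card_of_isEmpty, (hη (1 - c ^ 2) hc2).2 hsq]
      norm_num
end
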